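/- arXiv:2401.14085 — 3 statements merged into one kernel-verified Lean document; each statement's English description precedes it below -/
import Mathlib

section
/- If there exist a sensor s and iterations 1 < t' < t such that 𝔲_s(t−1) = 𝔲_s(t'−1) and 𝔲_s(t) = 𝔲_s(t'), then for every sensor s' one has 𝔲_{s'}(t) = 𝔲_{s'}(t'). -/
/-- `c` is the least element (in the linear order on `U`) among the maximizers of
the map `c ↦ ν (Function.update v s c)`. -/
def IsLeastArgmax {U : Type*} [LinearOrder U] {n : ℕ} (ν : (Fin n → U) → ℝ)
    (v : Fin n → U) (s : Fin n) (c : U) : Prop :=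
  (∀ c' : U, ν (Function.update v s c') ≤ ν (Function.update v s c)) ∧
  (∀ c' : U, (∀ c'' : U, ν (Function.update v s c'') ≤ ν (Function.update v s c')) → c ≤ c')

/-- The multi-sensor command `𝔲_s(t)` at sensor `s` and iteration `t`:
it agrees with `u (t-1)` on every coordinate `s' ≠ s` and equals `u t s` at `s`. -/
def cmd {U : Type*} {n : ℕ} (u : ℕ → Fin n → U) (s : Fin n) (t : ℕ) : Fin n → U :=
  Function.update (u (t - 1)) s (u t s)

theorem flooding_stopping_criterion_agreement
    {U : Type*} [Fintype U] [LinearOrder U] [Nonempty U]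
    {n : ℕ} (hn : 1 ≤ n) (ν : (Fin n → U) → ℝ) (u : ℕ → Fin n → U)
    (hu : ∀ t : ℕ, 1 ≤ t → ∀ s : Fin n, IsLeastArgmax ν (u (t - 1)) s (u t s))
    (s : Fin n) (t t' : ℕ) (ht'1 : 1 < t') (ht't : t' < t)
    (h1 : cmd u s (t - 1) = cmd u s (t' - 1))
    (h2 : cmd u s t = cmd u s t') :
    ∀ s' : Fin n, cmd u s' t = cmd u s' t' := by
  -- From h1 evaluated at s: u (t-1) s = u (t'-1) s
  have hs : u (t - 1) s = u (t' - 1) s := by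
    have := congrFun h1 s
    simpa [cmd, Function.update_self] using this
  -- From h2: u (t-1) = u (t'-1)
  have hprev : u (t - 1) = u (t' - 1) := by
    funext x
    by_cases hx : x = s
    · subst hx; exact hs
    · have := congrFun h2 x
      simpa [cmd, Function.update_of_ne hx] using this
  -- uniqueness of least argmax gives u t = u t'
  have hcur : u t = u t' := by
    funext x
    have ha : IsLeastArgmax ν (u (t - 1)) x (u t x) :=
      hu t (by omega) x
    have hb : IsLeastArgmax ν (u (t - 1)) x (u t' x) := by
      rw [hprev]; exact hu t' (by omega) x
    exact le_antisymm (ha.2 _ hb.1) (hb.2 _ ha.1)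
  intro s'
  simp [cmd, hprev, hcur]
end

section
/- If there exist a sensor s and iterations 1 < t' < t such that 𝔲_s(t−1) = 𝔲_s(t'−1) and 𝔲_s(t) = 𝔲_s(t'), then the full command vectors coincide at the corresponding iterations: u(t−1) = u(t'−1) (as functions Fin n → U) and consequently u(t) = u(t'). -/
theorem flooding_stopping_criterion_vectors_coincide
    {U : Type*} [Fintype U] [LinearOrder U] [Nonempty U]
    {n : ℕ} (hn : 1 ≤ n) (ν : (Fin n → U) → ℝ) (u : ℕ → Fin n → U)
    (hu : ∀ t : ℕ, 1 ≤ t → ∀ s : Fin n, IsLeastArgmax ν (u (t - 1)) s (u t s))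
    (s : Fin n) (t t' : ℕ) (ht'1 : 1 < t') (ht't : t' < t)
    (h1 : cmd u s (t - 1) = cmd u s (t' - 1))
    (h2 : cmd u s t = cmd u s t') :
    u (t - 1) = u (t' - 1) ∧ u t = u t' := by

  have hfirst : u (t - 1) = u (t' - 1) := by
    funext s''
    by_cases hs : s'' = s
    · subst hs
      have := congrFun h1 s''
      simpa [cmd, Function.update_self] using this
    · have := congrFun h2 s''
      simpa [cmd, Function.update_of_ne hs] using this
  refine ⟨hfirst, ?_⟩
  funext s''
  have hA := hu t (by omega) s''
  have hB := hu t' (by omega) s''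
  rw [hfirst] at hA
  exact le_antisymm (hA.2 _ hB.1) (hB.2 _ hA.1)
end

section
/- If for some sensor s and some t ≥ 3 one has 𝔲_s(t−1) = 𝔲_s(t−2) and 𝔲_s(t) = 𝔲_s(t−1) (the stopping criterion with t' = t−1, i.e. convergence), then the command vector is constant from iteration t−1 onward: u(τ) = u(t−1) for all τ ≥ t−1, and all sensor nodes agree on the selected multi-sensor control command: for all sensors s', s'' and all τ ≥ t, 𝔲_{s'}(τ) = 𝔲_{s''}(τ). -/
lemma IsLeastArgmax.unique {U : Type*} [LinearOrder U] {n : ℕ} {ν : (Fin n → U) → ℝ}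
    {v : Fin n → U} {s : Fin n} {c c' : U}
    (h : IsLeastArgmax ν v s c) (h' : IsLeastArgmax ν v s c') : c = c' :=
  le_antisymm (h.2 c' h'.1) (h'.2 c h.1)

theorem flooding_convergence_case
    {U : Type*} [Fintype U] [LinearOrder U] [Nonempty U]
    {n : ℕ} (hn : 1 ≤ n) (ν : (Fin n → U) → ℝ) (u : ℕ → Fin n → U)
    (hu : ∀ t : ℕ, 1 ≤ t → ∀ s : Fin n, IsLeastArgmax ν (u (t - 1)) s (u t s))
    (s : Fin n) (t : ℕ) (ht : 3 ≤ t)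
    (h1 : cmd u s (t - 1) = cmd u s (t - 2))
    (h2 : cmd u s t = cmd u s (t - 1)) :
    (∀ τ : ℕ, t - 1 ≤ τ → u τ = u (t - 1)) ∧
    (∀ s' s'' : Fin n, ∀ τ : ℕ, t ≤ τ → cmd u s' τ = cmd u s'' τ) := by
  have h112 : t - 1 - 1 = t - 2 := by omega
  have h12 : u (t - 1) = u (t - 2) := by
    funext x
    by_cases hx : x = s
    · subst hx
      have := congrFun h1 x
      simpa [cmd, h112, Function.update_self] using this
    · have := congrFun h2 x
      simpa [cmd, h112, Function.update_of_ne hx] using this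
  -- u t = u (t - 1)
  have hfix : u t = u (t - 1) := by
    funext s'
    have ha : IsLeastArgmax ν (u (t - 1)) s' (u t s') := by
      have := hu t (by omega) s'
      exact this
    have hb : IsLeastArgmax ν (u (t - 1)) s' (u (t - 1) s') := by
      have := hu (t - 1) (by omega) s'
      rw [h112, ← h12] at this
      exact this
    exact ha.unique hb
  have key : ∀ k : ℕ, u (t - 1 + k) = u (t - 1) := by
    intro k
    induction k with
    | zero => rfl
    | succ k ih =>
      funext s'
      have ha : IsLeastArgmax ν (u (t - 1)) s' (u (t - 1 + (k + 1)) s') := by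
        have := hu (t - 1 + (k + 1)) (by omega) s'
        have heq : t - 1 + (k + 1) - 1 = t - 1 + k := by omega
        rwa [heq, ih] at this
      have hb : IsLeastArgmax ν (u (t - 1)) s' (u (t - 1) s') := by
        have := hu t (by omega) s'
        rwa [hfix] at this
      exact ha.unique hb
  have hall : ∀ τ : ℕ, t - 1 ≤ τ → u τ = u (t - 1) := by
    intro τ hτ
    have : τ = t - 1 + (τ - (t - 1)) := by omega
    rw [this]; exact key _
  refine ⟨hall, fun s' s'' τ hτ => ?_⟩
  have hc : ∀ r : Fin n, cmd u r τ = u (t - 1) := by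
    intro r
    have e1 : u (τ - 1) = u (t - 1) := hall _ (by omega)
    have e2 : u τ = u (t - 1) := hall _ (by omega)
    simp [cmd, e1, e2, Function.update_eq_self]
  rw [hc s', hc s'']
end
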